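/- arXiv:2601.17283 — 6 statements merged into one kernel-verified Lean document; each statement's English description precedes it below -/
import Mathlib

section
/- Let δ_V, δ_T, k, γ be real numbers with δ_V > 0, δ_T ≥ 0 and γ ≥ 1, and define the complex constants c₁ = -δ_V·(i-1)/2 and c₂ = δ_T·k²·(γ-1)·(i-1)/2. Then the surface wave number k_Γ = ((1+c₁c₂)/c₁²)^(1/2), where the power denotes the principal branch of the complex square root (complex power z^(1/2)), has strictly positive imaginary part: Im k_Γ > 0. -/
open Complex

lemma im_cpow_half_pos {z : ℂ} (hz : 0 < z.im) : 0 < (z ^ ((1 : ℂ) / 2)).im := by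
  have hz0 : z ≠ 0 := fun h => by simp [h] at hz
  have harg_pos : 0 < z.arg := by
    rcases lt_or_eq_of_le (Complex.arg_nonneg_iff.2 hz.le) with h | h
    · exact h
    · exfalso
      have := Complex.arg_eq_zero_iff.1 h.symm
      simp [this.2] at hz
  have harg_lt : z.arg < Real.pi := by
    rcases lt_or_eq_of_le (Complex.arg_le_pi z) with h | h
    · exact h
    · exfalso
      have := Complex.arg_eq_pi_iff.1 h
      simp [this.2] at hz
  rw [Complex.cpow_def_of_ne_zero hz0, Complex.exp_im]
  have him : (Complex.log z * (1 / 2)).im = z.arg / 2 := by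
    simp [Complex.mul_im, Complex.log_im, Complex.log_re]
    ring
  rw [him]
  exact mul_pos (Real.exp_pos _)
    (Real.sin_pos_of_pos_of_lt_pi (by linarith) (by linarith [Real.pi_pos]))

theorem stmt_1 (δV δT k γ : ℝ) (hδV : 0 < δV) (hδT : 0 ≤ δT) (hγ : 1 ≤ γ)
    (c₁ c₂ : ℂ)
    (hc₁ : c₁ = -(δV : ℂ) * (Complex.I - 1) / 2)
    (hc₂ : c₂ = (δT : ℂ) * (k : ℂ)^2 * ((γ : ℂ) - 1) * (Complex.I - 1) / 2) :
    0 < (((1 + c₁ * c₂) / c₁ ^ 2) ^ ((1 : ℂ) / 2)).im := by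
  have hδV' : (δV : ℂ) ≠ 0 := by exact_mod_cast hδV.ne'
  have hval : (1 + c₁ * c₂) / c₁ ^ 2 =
      (((-(δV * δT * k ^ 2 * (γ - 1)) / δV ^ 2 : ℝ)) : ℂ) + (((2 / δV ^ 2 : ℝ)) : ℂ) * Complex.I := by
    have hc₁0 : c₁ ≠ 0 := by
      rw [hc₁]
      intro h
      apply hδV'
      have hI : Complex.I - 1 ≠ 0 := by
        intro h'
        have := congrArg Complex.im h'
        simp at this
      field_simp at h
      simpa [hI] using h
    rw [div_eq_iff (pow_ne_zero 2 hc₁0), hc₁, hc₂]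
    push_cast
    field_simp
    linear_combination ((4 : ℂ) - 2*Complex.I) * Complex.I_sq
  apply im_cpow_half_pos
  rw [hval]
  simp only [Complex.add_im, Complex.ofReal_im, Complex.mul_im, Complex.ofReal_re,
    Complex.I_im, Complex.I_re, mul_zero, mul_one, zero_add, zero_mul, add_zero]
  positivity
end

section
/- Let k ∈ ℂ with Im k > 0, let L > 0, and fix t ∈ ℝ. Define ψ : ℝ → ℂ by ψ(s) = Σ_{ℓ∈ℤ, ℓ≠0} exp(i·k·|s - t - ℓ·L|). Then for every s ∈ ℝ with |s - t| < L, ψ is twice differentiable at s and satisfies the homogeneous Helmholtz–Beltrami equation ψ''(s) + k²·ψ(s) = 0. -/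
theorem stmt_3 (k : ℂ) (hk : 0 < k.im) (L : ℝ) (hL : 0 < L) (t : ℝ)
    (ψ : ℝ → ℂ)
    (hψ : ψ = fun s : ℝ => ∑' ℓ : {ℓ : ℤ // ℓ ≠ 0},
      Complex.exp (Complex.I * k * (|s - t - ((ℓ : ℤ) : ℝ) * L| : ℝ))) :
    ∀ s : ℝ, |s - t| < L →
      DifferentiableAt ℝ ψ s ∧ DifferentiableAt ℝ (deriv ψ) s ∧
        deriv (deriv ψ) s + k ^ 2 * ψ s = 0 := by
  intro s hs
  set a : ℂ := Complex.I * k with ha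
  set r : ℂ := Complex.exp (a * L) with hrdef
  have hr : ‖r‖ < 1 := by
    rw [hrdef, Complex.norm_exp]
    rw [Real.exp_lt_one_iff]
    have : (a * (L : ℂ)).re = -(k.im * L) := by
      simp [ha, Complex.mul_re, Complex.mul_im]
    rw [this]
    nlinarith
  have hsum : Summable (fun n : ℕ => r ^ (n + 1)) :=
    ((summable_geometric_of_norm_lt_one hr).mul_left r).congr (by
      intro n; rw [pow_succ]; ring)
  set C : ℂ := ∑' n : ℕ, r ^ (n + 1) with hCdef
  have hC : HasSum (fun n : ℕ => r ^ (n + 1)) C := hsum.hasSum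
  set g : ℝ → ℂ := fun x : ℝ =>
    C * Complex.exp (a * ((t : ℂ) - (x : ℂ))) + C * Complex.exp (a * ((x : ℂ) - (t : ℂ)))
    with hgdef
  -- key pointwise identity on the interval
  have key : ∀ x : ℝ, |x - t| < L → ψ x = g x := by
    intro x hx
    rw [abs_lt] at hx
    set F : ℤ → ℂ := fun ℓ => Complex.exp (a * ((|x - t - (ℓ : ℝ) * L| : ℝ) : ℂ)) with hF
    have hsub : ψ x = ∑' ℓ : ℤ, Set.indicator {ℓ : ℤ | ℓ ≠ 0} F ℓ := by
      rw [hψ]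
      exact tsum_subtype {ℓ : ℤ | ℓ ≠ 0} F
    set ind : ℤ → ℂ := Set.indicator {ℓ : ℤ | ℓ ≠ 0} F with hind
    set E₁ : ℂ := Complex.exp (a * ((t : ℂ) - (x : ℂ))) with hE₁
    set E₂ : ℂ := Complex.exp (a * ((x : ℂ) - (t : ℂ))) with hE₂
    have hposterm : ∀ n : ℕ, ind ((n : ℤ) + 1) = E₁ * r ^ (n + 1) := by
      intro n
      have h1 : ((n : ℤ) + 1 : ℤ) ∈ {ℓ : ℤ | ℓ ≠ 0} := by
        simp only [Set.mem_setOf_eq]; omega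
      rw [hind, Set.indicator_of_mem h1 F]; simp only [hF]
      have habs : |x - t - (((n : ℤ) + 1 : ℤ) : ℝ) * L| = (t - x) + ((n : ℝ) + 1) * L := by
        push_cast
        rw [abs_of_nonpos (by nlinarith [Nat.cast_nonneg (α := ℝ) n])]
        ring
      rw [habs, hE₁, hrdef, ← Complex.exp_nat_mul, ← Complex.exp_add]
      congr 1
      push_cast
      ring
    have hnegterm : ∀ n : ℕ, ind (-((n : ℤ) + 1)) = E₂ * r ^ (n + 1) := by
      intro n
      have h1 : (-((n : ℤ) + 1) : ℤ) ∈ {ℓ : ℤ | ℓ ≠ 0} := by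
        simp only [Set.mem_setOf_eq]; omega
      rw [hind, Set.indicator_of_mem h1 F]; simp only [hF]
      have habs : |x - t - ((-((n : ℤ) + 1) : ℤ) : ℝ) * L| = (x - t) + ((n : ℝ) + 1) * L := by
        push_cast
        rw [abs_of_nonneg (by nlinarith [Nat.cast_nonneg (α := ℝ) n])]
        ring
      rw [habs, hE₂, hrdef, ← Complex.exp_nat_mul, ← Complex.exp_add]
      congr 1
      push_cast
      ring
    have hpos : HasSum (fun n : ℕ => ind (n : ℤ)) (E₁ * C) := by
      have h1 : HasSum (fun n : ℕ => ind ((n + 1 : ℕ) : ℤ)) (E₁ * C) := by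
        refine (hC.mul_left E₁).congr_fun fun n => ?_
        rw [show (((n + 1 : ℕ) : ℤ)) = (n : ℤ) + 1 by push_cast; ring, hposterm n]
      have := (hasSum_nat_add_iff (f := fun n : ℕ => ind (n : ℤ)) 1).mp h1
      simpa [hind, Set.indicator_of_notMem] using this
    have hneg : HasSum (fun n : ℕ => ind (-((n : ℤ) + 1))) (E₂ * C) :=
      (hC.mul_left E₂).congr_fun fun n => hnegterm n
    have htot : HasSum ind (E₁ * C + E₂ * C) := hpos.of_nat_of_neg_add_one hneg
    rw [hsub, htot.tsum_eq, hgdef]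
    ring
  -- derivative computations for g
  have hid : ∀ x : ℝ, HasDerivAt (fun y : ℝ => (y : ℂ)) 1 x := by
    intro x
    exact Complex.ofRealCLM.hasDerivAt (x := x)
  set g' : ℝ → ℂ := fun x : ℝ =>
    -(a * C) * Complex.exp (a * ((t : ℂ) - (x : ℂ))) +
      (a * C) * Complex.exp (a * ((x : ℂ) - (t : ℂ))) with hg'def
  have hg : ∀ x : ℝ, HasDerivAt g (g' x) x := by
    intro x
    have h1 : HasDerivAt (fun y : ℝ => a * ((t : ℂ) - (y : ℂ))) (a * (0 - 1)) x :=
      ((hasDerivAt_const x (t : ℂ)).sub (hid x)).const_mul a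
    have h2 : HasDerivAt (fun y : ℝ => a * ((y : ℂ) - (t : ℂ))) (a * (1 - 0)) x :=
      ((hid x).sub (hasDerivAt_const x (t : ℂ))).const_mul a
    have := ((h1.cexp.const_mul C).add (h2.cexp.const_mul C))
    convert this using 1
    · rfl
    · rfl
    rw [hg'def]
    ring
  have hg' : ∀ x : ℝ, HasDerivAt g' (a ^ 2 * g x) x := by
    intro x
    have h1 : HasDerivAt (fun y : ℝ => a * ((t : ℂ) - (y : ℂ))) (a * (0 - 1)) x :=
      ((hasDerivAt_const x (t : ℂ)).sub (hid x)).const_mul a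
    have h2 : HasDerivAt (fun y : ℝ => a * ((y : ℂ) - (t : ℂ))) (a * (1 - 0)) x :=
      ((hid x).sub (hasDerivAt_const x (t : ℂ))).const_mul a
    have := ((h1.cexp.const_mul (-(a * C))).add (h2.cexp.const_mul (a * C)))
    convert this using 1
    · rfl
    · rfl
    rw [hgdef]
    ring
  -- eventual equality
  have hball : ∀ x : ℝ, |x - t| < L → ψ =ᶠ[nhds x] g := by
    intro x hx
    have hmem : Metric.ball t L ∈ nhds x :=
      Metric.isOpen_ball.mem_nhds (by simpa [Real.dist_eq] using hx)
    filter_upwards [hmem] with y hy using key y (by simpa [Real.dist_eq] using hy)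
  have hEq := hball s hs
  have hd1 : DifferentiableAt ℝ ψ s :=
    (hg s).differentiableAt.congr_of_eventuallyEq hEq
  have hderiv_eq : ∀ x : ℝ, |x - t| < L → deriv ψ x = g' x := by
    intro x hx
    rw [(hball x hx).deriv_eq, (hg x).deriv]
  have hEq' : deriv ψ =ᶠ[nhds s] g' := by
    have hmem : Metric.ball t L ∈ nhds s :=
      Metric.isOpen_ball.mem_nhds (by simpa [Real.dist_eq] using hs)
    filter_upwards [hmem] with y hy using hderiv_eq y (by simpa [Real.dist_eq] using hy)
  have hd2 : DifferentiableAt ℝ (deriv ψ) s :=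
    (hg' s).differentiableAt.congr_of_eventuallyEq hEq'
  refine ⟨hd1, hd2, ?_⟩
  have h3 : deriv (deriv ψ) s = a ^ 2 * g s := by
    rw [hEq'.deriv_eq, (hg' s).deriv]
  rw [h3, ← key s hs, ha]
  have : (Complex.I * k) ^ 2 = -(k ^ 2) := by
    rw [mul_pow, Complex.I_sq]; ring
  rw [this]
  ring
end

section
/- Let k ∈ ℂ with Im k > 0, let L > 0, and let φ : ℝ → ℂ be twice continuously differentiable and L-periodic (φ(t+L) = φ(t) for all t). Define the periodic Green's function G(s,t) = (1/(2·i·k))·Σ_{ℓ∈ℤ} exp(i·k·|s - t - ℓ·L|). Then for every s ∈ ℝ, ∫_0^L G(s,t)·(φ''(t) + k²·φ(t)) dt = φ(s). -/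
open MeasureTheory Set Filter Complex Topology

lemma env_int (c : ℝ) (hc : 0 < c) : Integrable (fun u : ℝ => Real.exp (-c * |u|)) := by
  have hIoi : IntegrableOn (fun u : ℝ => Real.exp (-c * |u|)) (Ici 0) := by
    rw [integrableOn_Ici_iff_integrableOn_Ioi]
    apply (exp_neg_integrableOn_Ioi 0 hc).congr_fun ?_ measurableSet_Ioi
    intro x hx
    simp [abs_of_pos (mem_Ioi.mp hx)]
  have hIic : IntegrableOn (fun u : ℝ => Real.exp (-c * |u|)) (Iic 0) := by
    have key : (Iic (0:ℝ)).indicator (fun u : ℝ => Real.exp (-c * |u|))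
        = fun u : ℝ => (Ici (0:ℝ)).indicator (fun v : ℝ => Real.exp (-c * |v|)) (-u) := by
      funext u
      rcases le_or_gt u 0 with h | h
      · rw [indicator_of_mem (mem_Iic.mpr h), indicator_of_mem (mem_Ici.mpr (neg_nonneg.mpr h)),
          abs_neg]
      · rw [indicator_of_notMem (by simpa using h), indicator_of_notMem (by simpa using h)]
    have h2 : Integrable ((Iic (0:ℝ)).indicator fun u : ℝ => Real.exp (-c * |u|)) := by
      rw [key]
      exact ((integrable_indicator_iff measurableSet_Ici).mpr hIoi).comp_neg
    rwa [integrable_indicator_iff measurableSet_Iic] at h2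
  have := hIic.union hIoi
  rwa [Iic_union_Ici, integrableOn_univ] at this

lemma env_int' (c s : ℝ) (hc : 0 < c) : Integrable (fun u : ℝ => Real.exp (-c * |s - u|)) := by
  have h := (env_int c hc).comp_sub_right s
  apply h.congr
  filter_upwards with u
  rw [abs_sub_comm]

lemma nrm (k : ℂ) (r : ℝ) : ‖Complex.exp (Complex.I * k * (r:ℝ))‖ = Real.exp (-k.im * r) := by
  rw [Complex.norm_exp]
  congr 1
  simp [Complex.mul_re]

lemma line_int (k : ℂ) (hk : 0 < k.im) (s : ℝ) (φ : ℝ → ℂ)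
    (hd1 : Differentiable ℝ φ) (hd2 : Differentiable ℝ (deriv φ))
    (hc2 : Continuous (deriv (deriv φ)))
    (B1 : ℝ) (hB1 : ∀ t, ‖φ t‖ ≤ B1)
    (B2 : ℝ) (hB2 : ∀ t, ‖deriv φ t‖ ≤ B2)
    (C : ℝ) (hC : ∀ t, ‖deriv (deriv φ) t + k^2 * φ t‖ ≤ C) :
    ∫ u : ℝ, Complex.exp (Complex.I * k * (|s - u| : ℝ)) * (deriv (deriv φ) u + k^2 * φ u)
      = 2 * Complex.I * k * φ s := by
  set c := k.im with hc
  set ψ : ℝ → ℂ := fun u => deriv (deriv φ) u + k^2 * φ u with hψdef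
  have hψc : Continuous ψ := hc2.add (continuous_const.mul hd1.continuous)
  have hC0 : 0 ≤ C := le_trans (norm_nonneg _) (hC 0)
  set f : ℝ → ℂ := fun u => Complex.exp (Complex.I * k * (|s - u| : ℝ)) * ψ u with hfdef
  have hfc : Continuous f := by
    apply Continuous.mul ?_ hψc
    exact Complex.continuous_exp.comp (continuous_const.mul
      (Complex.continuous_ofReal.comp ((continuous_const.sub continuous_id).abs)))
  have hfnorm : ∀ u, ‖f u‖ = Real.exp (-c * |s - u|) * ‖ψ u‖ := by
    intro u
    rw [norm_mul, nrm]
  have hf_int : Integrable f := by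
    apply Integrable.mono ((env_int' c s hk).const_mul C) hfc.aestronglyMeasurable
    filter_upwards with u
    rw [hfnorm u]
    have hn : ‖C * Real.exp (-c * |s - u|)‖ = C * Real.exp (-c * |s - u|) :=
      Real.norm_of_nonneg (by positivity)
    rw [hn, mul_comm C]
    exact mul_le_mul_of_nonneg_left (hC u) (Real.exp_nonneg _)
  -- exponential factors
  have hEderivL : ∀ x : ℝ, HasDerivAt (fun u : ℝ => Complex.exp (I * k * ((s:ℂ) - u)))
      (-(I*k) * Complex.exp (I * k * ((s:ℂ) - x))) x := by
    intro x
    have h1 : HasDerivAt (fun u : ℝ => ((u:ℂ))) 1 x := by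
      exact Complex.ofRealCLM.hasDerivAt (x := x)
    have h2 : HasDerivAt (fun u : ℝ => (s:ℂ) - u) (-1) x := by
      exact h1.const_sub (s:ℂ)
    have h3 := (h2.const_mul (I*k)).cexp
    convert h3 using 1
    ring
  have hEderivR : ∀ x : ℝ, HasDerivAt (fun u : ℝ => Complex.exp (I * k * ((u:ℂ) - s)))
      ((I*k) * Complex.exp (I * k * ((x:ℂ) - s))) x := by
    intro x
    have h1 : HasDerivAt (fun u : ℝ => ((u:ℂ))) 1 x := by
      exact Complex.ofRealCLM.hasDerivAt (x := x)
    have h2 : HasDerivAt (fun u : ℝ => (u:ℂ) - s) 1 x := by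
      exact h1.sub_const (s:ℂ)
    have h3 := (h2.const_mul (I*k)).cexp
    convert h3 using 1
    ring
  -- left integral
  have hleft : ∫ u in Iic s, f u = deriv φ s + I * k * φ s := by
    have hcong : ∀ u ∈ Iic s, f u = Complex.exp (I * k * ((s:ℂ) - u)) * ψ u := by
      intro u hu
      have : (|s - u| : ℝ) = s - u := abs_of_nonneg (by simpa using hu.out)
      rw [hfdef]
      simp only [this]
      push_cast
      ring_nf
    rw [setIntegral_congr_fun measurableSet_Iic hcong]
    have hder : ∀ x ∈ Iic s, HasDerivAt
        (fun u : ℝ => Complex.exp (I * k * ((s:ℂ) - u)) * (deriv φ u + I * k * φ u))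
        (Complex.exp (I * k * ((s:ℂ) - x)) * ψ x) x := by
      intro x _
      have hP : HasDerivAt (fun u : ℝ => deriv φ u + I * k * φ u)
          (deriv (deriv φ) x + I * k * deriv φ x) x :=
        ((hd2 x).hasDerivAt).add (((hd1 x).hasDerivAt).const_mul (I*k))
      have := (hEderivL x).mul hP
      refine this.congr_deriv ?_
      rw [hψdef]
      simp only
      linear_combination (-Complex.exp (I * k * ((s:ℂ) - x)) * φ x * k^2) * Complex.I_sq
    have hint : IntegrableOn (fun u : ℝ => Complex.exp (I * k * ((s:ℂ) - u)) * ψ u) (Iic s) := by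
      apply (hf_int.integrableOn (s := Iic s)).congr_fun ?_ measurableSet_Iic
      intro u hu
      exact hcong u hu
    have htend : Tendsto (fun u : ℝ => Complex.exp (I * k * ((s:ℂ) - u)) * (deriv φ u + I * k * φ u))
        atBot (𝓝 0) := by
      apply squeeze_zero_norm (a := fun u : ℝ => Real.exp (c*u - c*s) * (B2 + ‖I*k‖ * B1))
      · intro u
        rw [norm_mul]
        apply mul_le_mul ?_ ?_ (norm_nonneg _) (Real.exp_nonneg _)
        · have : ((s:ℂ) - u) = ((s - u : ℝ) : ℂ) := by push_cast; ring
          rw [this, nrm]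
          apply le_of_eq
          congr 1
          ring
        · exact (norm_add_le _ _).trans (add_le_add (hB2 u)
            ((norm_mul _ _).le.trans (mul_le_mul_of_nonneg_left (hB1 u) (norm_nonneg _))))
      · have h1 : Tendsto (fun u : ℝ => c*u - c*s) atBot atBot := by
          apply tendsto_atBot_add_const_right
          exact (tendsto_const_mul_atBot_of_pos hk).mpr tendsto_id
        have := (Real.tendsto_exp_atBot.comp h1).mul_const (B2 + ‖I*k‖ * B1)
        simpa using this
    rw [integral_Iic_of_hasDerivAt_of_tendsto' hder hint htend]
    simp
  -- right integral
  have hright : ∫ u in Ioi s, f u = -(deriv φ s - I * k * φ s) := by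
    have hcong : ∀ u ∈ Ioi s, f u = Complex.exp (I * k * ((u:ℂ) - s)) * ψ u := by
      intro u hu
      have : (|s - u| : ℝ) = u - s := by
        rw [abs_sub_comm]; exact abs_of_nonneg (by simp at hu; linarith)
      rw [hfdef]
      simp only [this]
      push_cast
      ring_nf
    rw [setIntegral_congr_fun measurableSet_Ioi hcong]
    have hder : ∀ x ∈ Ici s, HasDerivAt
        (fun u : ℝ => Complex.exp (I * k * ((u:ℂ) - s)) * (deriv φ u - I * k * φ u))
        (Complex.exp (I * k * ((x:ℂ) - s)) * ψ x) x := by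
      intro x _
      have hP : HasDerivAt (fun u : ℝ => deriv φ u - I * k * φ u)
          (deriv (deriv φ) x - I * k * deriv φ x) x :=
        ((hd2 x).hasDerivAt).sub (((hd1 x).hasDerivAt).const_mul (I*k))
      have := (hEderivR x).mul hP
      refine this.congr_deriv ?_
      rw [hψdef]
      simp only
      linear_combination (-Complex.exp (I * k * ((x:ℂ) - s)) * φ x * k^2) * Complex.I_sq
    have hint : IntegrableOn (fun u : ℝ => Complex.exp (I * k * ((u:ℂ) - s)) * ψ u) (Ioi s) := by
      apply (hf_int.integrableOn (s := Ioi s)).congr_fun ?_ measurableSet_Ioi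
      intro u hu
      exact hcong u hu
    have htend : Tendsto (fun u : ℝ => Complex.exp (I * k * ((u:ℂ) - s)) * (deriv φ u - I * k * φ u))
        atTop (𝓝 0) := by
      apply squeeze_zero_norm (a := fun u : ℝ => Real.exp (c*s - c*u) * (B2 + ‖I*k‖ * B1))
      · intro u
        rw [norm_mul]
        apply mul_le_mul ?_ ?_ (norm_nonneg _) (Real.exp_nonneg _)
        · have : ((u:ℂ) - s) = ((u - s : ℝ) : ℂ) := by push_cast; ring
          rw [this, nrm]
          apply le_of_eq
          congr 1
          ring
        · exact (norm_sub_le _ _).trans (add_le_add (hB2 u)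
            ((norm_mul _ _).le.trans (mul_le_mul_of_nonneg_left (hB1 u) (norm_nonneg _))))
      · have h1 : Tendsto (fun u : ℝ => c*s - c*u) atTop atBot := by
          apply tendsto_atBot_add_const_left
          apply tendsto_neg_atBot_iff.mpr
          exact (tendsto_const_mul_atTop_of_pos hk).mpr tendsto_id
        have := (Real.tendsto_exp_atBot.comp h1).mul_const (B2 + ‖I*k‖ * B1)
        simpa using this
    rw [integral_Ioi_of_hasDerivAt_of_tendsto' hder hint htend]
    simp
  rw [← intervalIntegral.integral_Iic_add_Ioi hf_int.integrableOn hf_int.integrableOn,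
    hleft, hright]
  ring

lemma f_integrable (k : ℂ) (hk : 0 < k.im) (s : ℝ) (ψ : ℝ → ℂ) (hψc : Continuous ψ)
    (C : ℝ) (hC : ∀ t, ‖ψ t‖ ≤ C) :
    Integrable (fun u : ℝ => Complex.exp (Complex.I * k * (|s - u| : ℝ)) * ψ u) := by
  have hfc : Continuous (fun u : ℝ => Complex.exp (Complex.I * k * (|s - u| : ℝ)) * ψ u) := by
    apply Continuous.mul ?_ hψc
    exact Complex.continuous_exp.comp (continuous_const.mul
      (Complex.continuous_ofReal.comp ((continuous_const.sub continuous_id).abs)))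
  have hC0 : 0 ≤ C := le_trans (norm_nonneg _) (hC 0)
  apply Integrable.mono ((env_int' k.im s hk).const_mul C) hfc.aestronglyMeasurable
  filter_upwards with u
  rw [norm_mul, nrm]
  have hn : ‖C * Real.exp (-k.im * |s - u|)‖ = C * Real.exp (-k.im * |s - u|) :=
    Real.norm_of_nonneg (mul_nonneg hC0 (Real.exp_nonneg _))
  rw [hn, mul_comm C]
  exact mul_le_mul_of_nonneg_left (hC u) (Real.exp_nonneg _)

lemma periodic_bound {f : ℝ → ℂ} {L : ℝ} (hL : 0 < L) (hf : Continuous f)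
    (hper : Function.Periodic f L) : ∃ C, ∀ t, ‖f t‖ ≤ C := by
  obtain ⟨C, hC⟩ :=
    (isCompact_Icc (a := (0:ℝ)) (b := L)).exists_bound_of_continuousOn hf.continuousOn
  refine ⟨C, fun t => ?_⟩
  obtain ⟨y, hy, hyt⟩ := hper.exists_mem_Ico₀ hL t
  rw [hyt]
  exact hC y ⟨hy.1, hy.2.le⟩

theorem stmt_5 (k : ℂ) (hk : 0 < k.im) (L : ℝ) (hL : 0 < L)
    (φ : ℝ → ℂ) (hφ : ContDiff ℝ 2 φ) (hper : ∀ t : ℝ, φ (t + L) = φ t)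
    (G : ℝ → ℝ → ℂ)
    (hG : G = fun s t : ℝ => (1 / (2 * Complex.I * k)) *
      ∑' ℓ : ℤ, Complex.exp (Complex.I * k * (|s - t - (ℓ : ℝ) * L| : ℝ))) :
    ∀ s : ℝ,
      ∫ t in (0 : ℝ)..L, G s t * (deriv (deriv φ) t + k ^ 2 * φ t) = φ s := by
  intro s
  have h2 : ContDiff ℝ ((1:ℕ∞)+1) φ := by convert hφ using 2; norm_num
  rw [contDiff_succ_iff_deriv] at h2
  have hd1 : Differentiable ℝ φ := h2.1
  have hd2 : Differentiable ℝ (deriv φ) := h2.2.2.differentiable (by norm_num)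
  have hc2 : Continuous (deriv (deriv φ)) := h2.2.2.continuous_deriv le_rfl
  have Pφ : Function.Periodic φ L := hper
  have Pφ' : Function.Periodic (deriv φ) L := by
    intro t
    have hfun : (fun x => φ (x + L)) = φ := funext hper
    have h := deriv_comp_add_const (f := φ) (a := L) (x := t)
    rw [hfun] at h
    exact h.symm
  have Pψ : Function.Periodic (fun t => deriv (deriv φ) t + k^2 * φ t) L := by
    intro t
    have hfun : (fun x => deriv φ (x + L)) = deriv φ := funext Pφ'
    have h := deriv_comp_add_const (f := deriv φ) (a := L) (x := t)
    rw [hfun] at h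
    simp only
    rw [← h, hper t]
  set ψ : ℝ → ℂ := fun t => deriv (deriv φ) t + k^2 * φ t with hψdef
  have hψc : Continuous ψ := hc2.add (continuous_const.mul hd1.continuous)
  obtain ⟨B1, hB1⟩ := periodic_bound hL hd1.continuous Pφ
  obtain ⟨B2, hB2⟩ := periodic_bound hL hd2.continuous Pφ'
  obtain ⟨C, hC⟩ := periodic_bound hL hψc Pψ
  have hC0 : 0 ≤ C := le_trans (norm_nonneg _) (hC 0)
  set f : ℝ → ℂ := fun u => Complex.exp (Complex.I * k * (|s - u| : ℝ)) * ψ u with hfdef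
  have hf_int : Integrable f := f_integrable k hk s ψ hψc C hC
  have key : ∫ u : ℝ, f u = 2 * Complex.I * k * φ s :=
    line_int k hk s φ hd1 hd2 hc2 B1 hB1 B2 hB2 C hC
  set F : ℤ → ℝ → ℂ :=
    fun ℓ t => Complex.exp (Complex.I * k * (|s - t - (ℓ:ℝ) * L| : ℝ)) * ψ t with hFdef
  have hFc : ∀ ℓ, Continuous (F ℓ) := by
    intro ℓ
    apply Continuous.mul ?_ hψc
    exact Complex.continuous_exp.comp (continuous_const.mul
      (Complex.continuous_ofReal.comp ((continuous_const.sub continuous_id).sub continuous_const).abs))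
  have hFi : ∀ ℓ : ℤ, Integrable (F ℓ) (volume.restrict (Set.Ioc 0 L)) :=
    fun ℓ => (hFc ℓ).integrableOn_Ioc
  -- summability of integrals of norms
  have hFsum : Summable fun ℓ : ℤ => ∫ t in Set.Ioc (0:ℝ) L, ‖F ℓ t‖ := by
    set D : ℝ := C * Real.exp (k.im * (|s| + L)) with hD
    have hD0 : 0 ≤ D := mul_nonneg hC0 (Real.exp_nonneg _)
    have hbound : ∀ ℓ : ℤ, ∫ t in Set.Ioc (0:ℝ) L, ‖F ℓ t‖
        ≤ (D * Real.exp (-(k.im * L) * |(ℓ:ℝ)|)) * L := by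
      intro ℓ
      have hpt : ∀ t ∈ Set.Ioc (0:ℝ) L, ‖F ℓ t‖ ≤ D * Real.exp (-(k.im * L) * |(ℓ:ℝ)|) := by
        intro t ht
        rw [hFdef]
        simp only
        rw [norm_mul, nrm]
        have habs : |(ℓ:ℝ)| * L - (|s| + L) ≤ |s - t - (ℓ:ℝ)*L| := by
          have h1 : |(ℓ:ℝ)*L| ≤ |s - t - (ℓ:ℝ)*L| + |s - t| := by
            have := abs_sub_abs_le_abs_sub ((ℓ:ℝ)*L) (s - t)
            have h2 := abs_sub ((ℓ:ℝ)*L) (s - t)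
            calc |(ℓ:ℝ)*L| = |(s - t - (ℓ:ℝ)*L) - (s - t)| + 0 := by rw [abs_sub_comm]; ring_nf
              _ ≤ |s - t - (ℓ:ℝ)*L| + |s - t| := by
                  rw [add_zero]
                  exact (abs_sub _ _)
          have h3 : |s - t| ≤ |s| + L := by
            have := abs_sub s t
            have h4 : |t| ≤ L := by
              rw [abs_of_pos ht.1]; exact ht.2
            calc |s - t| ≤ |s| + |t| := abs_sub s t
              _ ≤ |s| + L := by linarith
          rw [abs_mul, abs_of_pos hL] at h1
          linarith
        calc Real.exp (-k.im * |s - t - (ℓ:ℝ)*L|) * ‖ψ t‖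
            ≤ Real.exp (-k.im * (|(ℓ:ℝ)| * L - (|s| + L))) * C := by
              apply mul_le_mul ?_ (hC t) (norm_nonneg _) (Real.exp_nonneg _)
              apply Real.exp_le_exp.mpr
              nlinarith [hk]
          _ = D * Real.exp (-(k.im * L) * |(ℓ:ℝ)|) := by
              rw [hD, mul_comm (Real.exp _) C, mul_assoc, ← Real.exp_add]
              congr 1
              ring
      calc ∫ t in Set.Ioc (0:ℝ) L, ‖F ℓ t‖
          ≤ ∫ _t in Set.Ioc (0:ℝ) L, D * Real.exp (-(k.im * L) * |(ℓ:ℝ)|) := by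
            apply setIntegral_mono_on (hFi ℓ).norm ((integrableOn_const_iff).mpr (Or.inr ?_))
              measurableSet_Ioc hpt
            rw [Real.volume_Ioc]
            exact ENNReal.ofReal_lt_top
        _ = (D * Real.exp (-(k.im * L) * |(ℓ:ℝ)|)) * L := by
            rw [setIntegral_const, measureReal_def, Real.volume_Ioc, smul_eq_mul]
            rw [ENNReal.toReal_ofReal (by linarith)]
            ring
    apply Summable.of_nonneg_of_le
      (fun ℓ => integral_nonneg (fun t => norm_nonneg _)) hbound
    apply Summable.mul_right
    apply Summable.mul_left
    -- Summable fun ℓ : ℤ => exp (-(k.im*L) * |ℓ|)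
    have hcL : 0 < k.im * L := mul_pos hk hL
    have hgeo : Summable (fun n : ℕ => Real.exp (-(k.im*L) * n)) := by
      have := summable_geometric_of_lt_one (Real.exp_nonneg (-(k.im*L)))
        (Real.exp_lt_one_iff.mpr (by linarith) : Real.exp (-(k.im*L)) < 1)
      convert this using 2 with n
      rw [← Real.exp_nat_mul]; ring_nf
    apply Summable.of_nat_of_neg <;>
    · apply hgeo.congr
      intro n
      simp
  -- translation identity
  have htrans : ∀ ℓ : ℤ, ∫ t in Set.Ioc (0:ℝ) L, F ℓ t
      = ∫ u in Set.Ioc ((ℓ:ℝ)*L) ((ℓ:ℝ)*L + L), f u := by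
    intro ℓ
    have h1 : ∀ t : ℝ, F ℓ t = f (t + (ℓ:ℝ)*L) := by
      intro t
      rw [hFdef, hfdef]
      simp only
      rw [(Pψ.int_mul ℓ) t, sub_add_eq_sub_sub]
    calc ∫ t in Set.Ioc (0:ℝ) L, F ℓ t = ∫ t in (0:ℝ)..L, f (t + (ℓ:ℝ)*L) := by
          rw [intervalIntegral.integral_of_le hL.le]
          exact setIntegral_congr_fun measurableSet_Ioc (fun t _ => h1 t)
      _ = ∫ u in (0 + (ℓ:ℝ)*L)..(L + (ℓ:ℝ)*L), f u :=
          intervalIntegral.integral_comp_add_right f _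
      _ = ∫ u in Set.Ioc ((ℓ:ℝ)*L) ((ℓ:ℝ)*L + L), f u := by
          rw [intervalIntegral.integral_of_le (by linarith)]
          rw [zero_add, add_comm L]
  -- partition of ℝ
  have hdisj : Pairwise (Function.onFun Disjoint fun ℓ : ℤ => Set.Ioc ((ℓ:ℝ)*L) ((ℓ:ℝ)*L + L)) := by
    intro i j hij
    rcases hij.lt_or_gt with h | h
    · apply Set.Ioc_disjoint_Ioc.mpr
      have : ((i:ℝ)+1) ≤ (j:ℝ) := by exact_mod_cast Int.add_one_le_iff.mpr h
      have : (i:ℝ)*L + L ≤ (j:ℝ)*L := by nlinarith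
      exact le_trans (min_le_left _ _) (le_trans this (le_max_right _ _))
    · apply Set.Ioc_disjoint_Ioc.mpr
      have : ((j:ℝ)+1) ≤ (i:ℝ) := by exact_mod_cast Int.add_one_le_iff.mpr h
      have : (j:ℝ)*L + L ≤ (i:ℝ)*L := by nlinarith
      exact le_trans (min_le_right _ _) (le_trans this (le_max_left _ _))
  have hU : (⋃ ℓ : ℤ, Set.Ioc ((ℓ:ℝ)*L) ((ℓ:ℝ)*L + L)) = Set.univ := by
    ext x
    simp only [Set.mem_iUnion, Set.mem_Ioc, Set.mem_univ, iff_true]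
    obtain ⟨m, hm, _⟩ := existsUnique_add_zsmul_mem_Ioc hL x 0
    rw [zsmul_eq_mul, zero_add] at hm
    refine ⟨-m, ?_, ?_⟩
    · push_cast
      have := hm.1
      nlinarith [hm.1]
    · push_cast
      nlinarith [hm.2]
  have hsum_int : ∑' ℓ : ℤ, ∫ u in Set.Ioc ((ℓ:ℝ)*L) ((ℓ:ℝ)*L + L), f u = ∫ u : ℝ, f u := by
    have h := integral_iUnion (μ := volume) (f := f)
      (s := fun ℓ : ℤ => Set.Ioc ((ℓ:ℝ)*L) ((ℓ:ℝ)*L + L))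
      (fun ℓ => measurableSet_Ioc) hdisj (by rw [hU]; exact hf_int.integrableOn)
    rw [hU, Measure.restrict_univ] at h
    exact h.symm
  -- assemble
  have hk0 : k ≠ 0 := fun h => by simp [h] at hk
  have hknz : 2 * Complex.I * k ≠ 0 :=
    mul_ne_zero (mul_ne_zero two_ne_zero Complex.I_ne_zero) hk0
  calc ∫ t in (0:ℝ)..L, G s t * ψ t
      = ∫ t in Set.Ioc (0:ℝ) L, G s t * ψ t := intervalIntegral.integral_of_le hL.le
    _ = ∫ t in Set.Ioc (0:ℝ) L, (1 / (2 * Complex.I * k)) * ∑' ℓ : ℤ, F ℓ t := by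
        apply setIntegral_congr_fun measurableSet_Ioc
        intro t _
        rw [hG]
        beta_reduce
        rw [mul_assoc, tsum_mul_right]
    _ = (1 / (2 * Complex.I * k)) * ∫ t in Set.Ioc (0:ℝ) L, ∑' ℓ : ℤ, F ℓ t :=
        integral_const_mul _ _
    _ = (1 / (2 * Complex.I * k)) * ∑' ℓ : ℤ, ∫ t in Set.Ioc (0:ℝ) L, F ℓ t := by
        rw [← integral_tsum_of_summable_integral_norm hFi hFsum]
    _ = (1 / (2 * Complex.I * k)) * ∫ u : ℝ, f u := by
        rw [tsum_congr htrans, hsum_int]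
    _ = φ s := by
        rw [key]
        field_simp
end

section
/- For every ε > 0, the integral ∫_{-ε}^{ε} (2h³ + 6h·s²)/(h² + s²)² ds tends to 4π as h → 0 from the right. -/
open Filter

lemma aux_deriv (h : ℝ) (hh : 0 < h) (s : ℝ) :
    HasDerivAt (fun s : ℝ => 4 * Real.arctan (s / h) - 2 * h * s / (h ^ 2 + s ^ 2))
      ((2 * h ^ 3 + 6 * h * s ^ 2) / (h ^ 2 + s ^ 2) ^ 2) s := by
  have hd : (h : ℝ) ^ 2 + s ^ 2 ≠ 0 := by positivity
  have h1 : HasDerivAt (fun s : ℝ => Real.arctan (s / h))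
      ((1 / (1 + (s / h) ^ 2)) * (1 / h)) s := by
    have := (Real.hasDerivAt_arctan (s / h)).comp s ((hasDerivAt_id s).div_const h)
    simpa [Function.comp_def] using this
  have h2 : HasDerivAt (fun s : ℝ => 2 * h * s / (h ^ 2 + s ^ 2))
      ((2 * h * (h ^ 2 + s ^ 2) - 2 * h * s * (2 * s)) / (h ^ 2 + s ^ 2) ^ 2) s := by
    have hn : HasDerivAt (fun s : ℝ => 2 * h * s) (2 * h) s := by
      simpa using (hasDerivAt_id s).const_mul (2 * h)
    have hden : HasDerivAt (fun s : ℝ => h ^ 2 + s ^ 2) (2 * s) s := by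
      have := ((hasDerivAt_pow 2 s).const_add (h ^ 2))
      simpa [mul_comm] using this
    simpa [Pi.div_def] using hn.div hden hd
  have := (h1.const_mul 4).sub h2
  refine this.congr_deriv ?_
  have hh' : h ≠ 0 := ne_of_gt hh
  field_simp
  ring

lemma integral_eq (ε : ℝ) (h : ℝ) (hh : 0 < h) :
    (∫ s in (-ε)..ε, (2 * h ^ 3 + 6 * h * s ^ 2) / (h ^ 2 + s ^ 2) ^ 2) =
      (4 * Real.arctan (ε / h) - 2 * h * ε / (h ^ 2 + ε ^ 2)) -
      (4 * Real.arctan (-ε / h) - 2 * h * (-ε) / (h ^ 2 + (-ε) ^ 2)) := by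
  rw [intervalIntegral.integral_eq_sub_of_hasDerivAt
    (fun s _ => aux_deriv h hh s)]
  apply ContinuousOn.intervalIntegrable
  apply ContinuousOn.div (by fun_prop) (by fun_prop)
  intro s _
  positivity

theorem stmt_9 (ε : ℝ) (hε : 0 < ε) :
    Tendsto
      (fun h : ℝ =>
        ∫ s in (-ε)..ε, (2 * h ^ 3 + 6 * h * s ^ 2) / (h ^ 2 + s ^ 2) ^ 2)
      (nhdsWithin 0 (Set.Ioi 0)) (nhds (4 * Real.pi)) := by
  have key : ∀ h ∈ Set.Ioi (0:ℝ),
      (∫ s in (-ε)..ε, (2 * h ^ 3 + 6 * h * s ^ 2) / (h ^ 2 + s ^ 2) ^ 2) =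
        8 * Real.arctan (ε / h) - 4 * h * ε / (h ^ 2 + ε ^ 2) := by
    intro h hh
    rw [integral_eq ε h hh]
    have : Real.arctan (-ε / h) = - Real.arctan (ε / h) := by
      rw [neg_div, Real.arctan_neg]
    rw [this]
    ring
  rw [tendsto_congr' (eventuallyEq_of_mem self_mem_nhdsWithin key)]
  have h1 : Tendsto (fun h : ℝ => ε / h) (nhdsWithin 0 (Set.Ioi 0)) atTop := by
    have := tendsto_inv_nhdsGT_zero.const_mul_atTop hε
    simpa [div_eq_mul_inv] using this
  have h2 : Tendsto (fun h : ℝ => 8 * Real.arctan (ε / h))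
      (nhdsWithin 0 (Set.Ioi 0)) (nhds (8 * (Real.pi / 2))) :=
    ((Real.tendsto_arctan_atTop.mono_right nhdsWithin_le_nhds).comp h1).const_mul 8
  have h3 : Tendsto (fun h : ℝ => 4 * h * ε / (h ^ 2 + ε ^ 2))
      (nhdsWithin 0 (Set.Ioi 0)) (nhds 0) := by
    have hc : ContinuousAt (fun h : ℝ => 4 * h * ε / (h ^ 2 + ε ^ 2)) 0 := by
      apply ContinuousAt.div (by fun_prop) (by fun_prop)
      positivity
    have := hc.tendsto.mono_left (nhdsWithin_le_nhds (s := Set.Ioi 0))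
    simpa using this
  have := h2.sub h3
  have hpi : 8 * (Real.pi / 2) - 0 = 4 * Real.pi := by ring
  rwa [hpi] at this
end

section
/- There exists a constant C > 0 with the following property: for every M ≥ 0 and every measurable function f : ℝ → ℂ satisfying ‖f(s)‖ ≤ M·|s| for all s, and for all h > 0 and ε > 0, one has ‖∫_{-ε}^{ε} (2h³ + 6h·s²)/(h² + s²)² · f(s) ds‖ ≤ C·M·ε. -/
theorem stmt_12 :
    ∃ C : ℝ, 0 < C ∧ ∀ M : ℝ, 0 ≤ M → ∀ f : ℝ → ℂ, Measurable f →
      (∀ s : ℝ, ‖f s‖ ≤ M * |s|) → ∀ h : ℝ, 0 < h → ∀ ε : ℝ, 0 < ε →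
        ‖∫ s in (-ε)..ε,
            (((2 * h ^ 3 + 6 * h * s ^ 2) / (h ^ 2 + s ^ 2) ^ 2 : ℝ) : ℂ) * f s‖ ≤
          C * M * ε := by
  refine ⟨6, by norm_num, fun M hM f hf hbound h hh ε hε => ?_⟩
  have key : ∀ s : ℝ, ‖(((2 * h ^ 3 + 6 * h * s ^ 2) / (h ^ 2 + s ^ 2) ^ 2 : ℝ) : ℂ) * f s‖
      ≤ 3 * M := by
    intro s
    have hden : (0:ℝ) < (h ^ 2 + s ^ 2) ^ 2 := by positivity
    have hk : (0:ℝ) ≤ (2 * h ^ 3 + 6 * h * s ^ 2) / (h ^ 2 + s ^ 2) ^ 2 := by positivity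
    rw [norm_mul, Complex.norm_real, Real.norm_eq_abs, abs_of_nonneg hk]
    calc (2 * h ^ 3 + 6 * h * s ^ 2) / (h ^ 2 + s ^ 2) ^ 2 * ‖f s‖
        ≤ (2 * h ^ 3 + 6 * h * s ^ 2) / (h ^ 2 + s ^ 2) ^ 2 * (M * |s|) := by
          exact mul_le_mul_of_nonneg_left (hbound s) hk
      _ ≤ 3 * M := by
          rw [div_mul_eq_mul_div, div_le_iff₀ hden]
          have habs : 0 ≤ |s| := abs_nonneg s
          have hs2 : |s| ^ 2 = s ^ 2 := sq_abs s
          have ht : (2 * h ^ 3 + 6 * h * |s| ^ 2) * |s| ≤ 3 * (h ^ 2 + |s| ^ 2) ^ 2 := by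
            nlinarith [mul_nonneg (sq_nonneg h) (sq_nonneg (h - |s|)),
              mul_nonneg (sq_nonneg |s|) (sq_nonneg (h - |s|)),
              sq_nonneg (h ^ 2), mul_nonneg (sq_nonneg h) (sq_nonneg |s|)]
          rw [← hs2]
          nlinarith [mul_le_mul_of_nonneg_left ht hM]
  have := intervalIntegral.norm_integral_le_of_norm_le_const
    (a := -ε) (b := ε) (C := 3 * M)
    (f := fun s => (((2 * h ^ 3 + 6 * h * s ^ 2) / (h ^ 2 + s ^ 2) ^ 2 : ℝ) : ℂ) * f s)
    (fun x _ => key x)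
  calc ‖∫ s in (-ε)..ε, (((2 * h ^ 3 + 6 * h * s ^ 2) / (h ^ 2 + s ^ 2) ^ 2 : ℝ) : ℂ) * f s‖
      ≤ 3 * M * |ε - (-ε)| := this
    _ = 6 * M * ε := by rw [abs_of_nonneg (by linarith : (0:ℝ) ≤ ε - (-ε))]; ring
end

section
/- Let σ : ℝ → ℂ be Lipschitz continuous with compact support, and fix s₀ ∈ ℝ. Then ∫_ℝ (2h³ + 6h·(s - s₀)²)/(h² + (s - s₀)²)² · σ(s) ds tends to 4π·σ(s₀) as h → 0 from the right. -/
open Filter MeasureTheory Real Set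

noncomputable def phiK : ℝ → ℝ := fun u => (2 + 6 * u ^ 2) / (1 + u ^ 2) ^ 2

lemma phiK_nonneg (u : ℝ) : 0 ≤ phiK u := by unfold phiK; positivity

lemma phiK_le (u : ℝ) : phiK u ≤ 6 * (1 + u ^ 2)⁻¹ := by
  unfold phiK
  have h : 6 * (1 + u ^ 2)⁻¹ = 6 * (1 + u ^ 2) / (1 + u ^ 2) ^ 2 := by
    field_simp
  rw [h]
  gcongr
  nlinarith [sq_nonneg u]

lemma phiK_cont : Continuous phiK :=
  Continuous.div (by continuity) (by continuity) (fun u => by positivity)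

lemma phiK_integrable : Integrable phiK := by
  refine (integrable_inv_one_add_sq.const_mul 6).mono
    phiK_cont.aestronglyMeasurable (ae_of_all _ fun u => ?_)
  rw [Real.norm_eq_abs, Real.norm_eq_abs, abs_of_nonneg (phiK_nonneg u),
    abs_of_nonneg (by positivity)]
  exact phiK_le u

lemma phiK_hasDeriv (u : ℝ) :
    HasDerivAt (fun u : ℝ => 4 * Real.arctan u - 2 * u / (1 + u ^ 2)) (phiK u) u := by
  have hne : (1 + u ^ 2 : ℝ) ≠ 0 := by positivity
  have h1 : HasDerivAt (fun u : ℝ => 4 * Real.arctan u) (4 * (1 / (1 + u ^ 2))) u :=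
    (Real.hasDerivAt_arctan u).const_mul 4
  have h2 := ((hasDerivAt_id u).const_mul 2).div ((hasDerivAt_pow 2 u).const_add 1) hne
  refine (h1.sub h2).congr_deriv (Eq.symm ?_)
  unfold phiK
  push_cast [id]
  field_simp
  ring

lemma phiK_integral : ∫ u : ℝ, phiK u = 4 * π := by
  have hlim : ∀ c : Filter ℝ, c = atTop ∨ c = atBot →
      Tendsto (fun u : ℝ => 2 * u / (1 + u ^ 2)) c (nhds 0) := by
    intro c hc
    have h0 : Tendsto (fun u : ℝ => u⁻¹) c (nhds 0) := by
      rcases hc with rfl | rfl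
      · exact tendsto_inv_atTop_zero
      · have hneg : Tendsto (fun u : ℝ => (-u)⁻¹) atBot (nhds 0) :=
          tendsto_inv_atTop_zero.comp tendsto_neg_atBot_atTop
        have h2 : Tendsto (fun u : ℝ => -(-u)⁻¹) atBot (nhds (-0)) := hneg.neg
        simp only [neg_zero, inv_neg, neg_neg] at h2
        exact h2
    have h3 : Tendsto (fun u : ℝ => (2 * u⁻¹) / (u⁻¹ * u⁻¹ + 1)) c
        (nhds (((2 : ℝ) * 0) / ((0 : ℝ) * 0 + 1))) :=
      (h0.const_mul 2).div ((h0.mul h0).add_const 1) (by norm_num)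
    have this : Tendsto (fun u : ℝ => (2 * u⁻¹) / (u⁻¹ * u⁻¹ + 1)) c (nhds 0) := by
      convert h3 using 2
      norm_num
    refine this.congr' ?_
    have hne : ∀ᶠ u : ℝ in c, u ≠ 0 := by
      rcases hc with rfl | rfl
      · exact eventually_atTop.2 ⟨1, fun u hu => by linarith⟩
      · exact eventually_atBot.2 ⟨-1, fun u hu => by linarith⟩
    filter_upwards [hne] with u hu
    have hden : (0:ℝ) < u⁻¹ * u⁻¹ + 1 := by nlinarith [mul_self_nonneg u⁻¹]
    rw [div_eq_div_iff hden.ne' (by positivity)]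
    field_simp
  have hbot : Tendsto (fun u : ℝ => 4 * Real.arctan u - 2 * u / (1 + u ^ 2)) atBot
      (nhds (4 * (-(π / 2)) - 0)) := by
    exact (((tendsto_nhds_of_tendsto_nhdsWithin Real.tendsto_arctan_atBot).const_mul 4).sub
      (hlim _ (Or.inr rfl)))
  have htop : Tendsto (fun u : ℝ => 4 * Real.arctan u - 2 * u / (1 + u ^ 2)) atTop
      (nhds (4 * (π / 2) - 0)) := by
    exact (((tendsto_nhds_of_tendsto_nhdsWithin Real.tendsto_arctan_atTop).const_mul 4).sub
      (hlim _ (Or.inl rfl)))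
  have := MeasureTheory.integral_of_hasDerivAt_of_tendsto phiK_hasDeriv phiK_integrable hbot htop
  rw [this]; ring

theorem stmt_13 (σ : ℝ → ℂ) (hlip : ∃ K : NNReal, LipschitzWith K σ)
    (hsupp : HasCompactSupport σ) (s₀ : ℝ) :
    Tendsto
      (fun h : ℝ =>
        ∫ s : ℝ,
          (((2 * h ^ 3 + 6 * h * (s - s₀) ^ 2) / (h ^ 2 + (s - s₀) ^ 2) ^ 2 : ℝ) : ℂ)
            * σ s)
      (nhdsWithin 0 (Set.Ioi 0)) (nhds (4 * Real.pi * σ s₀)) := by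
  obtain ⟨K, hK⟩ := hlip
  have hcont : Continuous σ := hK.continuous
  obtain ⟨M, hM⟩ := hsupp.exists_bound_of_continuous hcont
  have hM0 : 0 ≤ M := le_trans (norm_nonneg _) (hM 0)
  set F : ℝ → ℝ → ℂ := fun h u => (phiK u : ℂ) * σ (s₀ + h * u) with hF
  have key : ∀ h : ℝ, 0 < h →
      (∫ s : ℝ, (((2 * h ^ 3 + 6 * h * (s - s₀) ^ 2) / (h ^ 2 + (s - s₀) ^ 2) ^ 2 : ℝ) : ℂ)
          * σ s) = ∫ u : ℝ, F h u := by
    intro h hh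
    set g : ℝ → ℂ :=
      fun t => (((2 * h ^ 3 + 6 * h * t ^ 2) / (h ^ 2 + t ^ 2) ^ 2 : ℝ) : ℂ) * σ (s₀ + t) with hg
    have e1 : (∫ s : ℝ, (((2 * h ^ 3 + 6 * h * (s - s₀) ^ 2) / (h ^ 2 + (s - s₀) ^ 2) ^ 2 : ℝ) : ℂ)
        * σ s) = ∫ s : ℝ, g (s - s₀) := by
      congr 1
      funext s
      simp [hg]
    have e5 : ∀ x : ℝ, h • g (h * x) = F h x := by
      intro x
      simp only [hg, hF]
      rw [← smul_mul_assoc]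
      congr 1
      rw [Complex.real_smul, ← Complex.ofReal_mul, Complex.ofReal_inj]
      unfold phiK
      have hne : (h ^ 2 + (h * x) ^ 2 : ℝ) ≠ 0 := by positivity
      field_simp
    have e6 : (∫ x : ℝ, F h x) = h • ∫ x : ℝ, g (h * x) := by
      rw [← integral_smul]
      congr 1
      funext x
      rw [e5]
    rw [e1, integral_sub_right_eq_self g s₀, e6, MeasureTheory.Measure.integral_comp_mul_left g h,
      abs_of_pos (inv_pos.2 hh), smul_smul, mul_inv_cancel₀ hh.ne', one_smul]
  have hmain : Tendsto (fun h : ℝ => ∫ u : ℝ, F h u) (nhdsWithin 0 (Set.Ioi 0))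
      (nhds (∫ u : ℝ, (phiK u : ℂ) * σ s₀)) := by
    apply tendsto_integral_filter_of_dominated_convergence (fun u => phiK u * M)
    · filter_upwards with h
      exact ((Complex.continuous_ofReal.comp phiK_cont).mul
        (hcont.comp (by continuity))).aestronglyMeasurable
    · filter_upwards with h
      filter_upwards with u
      simp only [hF]
      rw [norm_mul, Complex.norm_real, Real.norm_eq_abs, abs_of_nonneg (phiK_nonneg u)]
      exact mul_le_mul_of_nonneg_left (hM _) (phiK_nonneg u)
    · exact phiK_integrable.mul_const M
    · filter_upwards with u
      have ht : Tendsto (fun h : ℝ => s₀ + h * u) (nhdsWithin 0 (Set.Ioi 0)) (nhds s₀) := by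
        have h1 : Tendsto (fun h : ℝ => s₀ + h * u) (nhds 0) (nhds (s₀ + 0 * u)) :=
          ((continuous_const.add (continuous_id.mul continuous_const)).tendsto 0)
        simpa using h1.mono_left nhdsWithin_le_nhds
      exact ((hcont.tendsto s₀).comp ht).const_mul _
  have hval : (∫ u : ℝ, (phiK u : ℂ) * σ s₀) = 4 * Real.pi * σ s₀ := by
    rw [integral_mul_const,
      show (∫ u : ℝ, ((phiK u : ℝ) : ℂ)) = ((∫ u : ℝ, phiK u : ℝ) : ℂ) from integral_ofReal,
      phiK_integral]
    push_cast
    ring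
  rw [← hval]
  refine hmain.congr' ?_
  filter_upwards [self_mem_nhdsWithin] with h hh
  exact (key h hh).symm
end
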